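/- One has CRB_LB < CRB_LB,N; that is, the narrowband closed form strictly upper-bounds CRB_LB for every effective bandwidth W_e > 0. -/

import Mathlib

/-!
With `B = 4 W_e / c²`, the path loss is `g(r) = γ² r^{-γ-2} + B r^{-γ}`. Dropping the `B`-term
strictly decreases `Z(s)`, and the narrowband `Z` that remains has the closed form
`Γ(γ/(γ+2)) (γ² s)^{2/(γ+2)} / 2`: substituting `u = r^{-(γ+2)}` and integrating by parts reduces
it to `Γ`. Hence `exp(-2πλ Z(s)) < exp(-K s^a)` for all `s > 0`, with `a = 2/(γ+2)` and
`K = πλ Γ(γ/(γ+2)) γ^{2a}`, and `∫ exp(-K s^a) ds = K^{-1/a} Γ(1/a + 1)` is exactly the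
narrowband bound. The left integrand is measurable because `Z` is monotone.
-/

open MeasureTheory Real Set Filter Topology

theorem one_sub_exp_neg_nonneg {x : ℝ} (hx : 0 ≤ x) : 0 ≤ 1 - exp (-x) := by
  linarith [exp_le_one_iff.2 (neg_nonpos.2 hx)]

theorem one_sub_exp_neg_le_self (x : ℝ) : 1 - exp (-x) ≤ x := by
  linarith [one_sub_le_exp_neg x]

theorem one_sub_exp_neg_le_one (x : ℝ) : 1 - exp (-x) ≤ 1 := by
  linarith [exp_pos (-x)]

theorem setIntegral_lt_setIntegral_of_forall_lt {X : Type*} [MeasurableSpace X] {μ : Measure X}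
    {s : Set X} {f g : X → ℝ} (hs : MeasurableSet s) (hμs : μ s ≠ 0)
    (hf : IntegrableOn f s μ) (hg : IntegrableOn g s μ) (hlt : ∀ x ∈ s, f x < g x) :
    ∫ x in s, f x ∂μ < ∫ x in s, g x ∂μ := by
  rw [← sub_pos, ← integral_sub hg hf, setIntegral_pos_iff_support_of_nonneg_ae
    ((ae_restrict_iff' hs).2 (ae_of_all _ fun x hx => (sub_pos.2 (hlt x hx)).le)) (hg.sub hf)]
  rwa [inter_eq_right.2 fun x hx => Function.mem_support.2 (sub_pos.2 (hlt x hx)).ne',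
    pos_iff_ne_zero]

theorem integrableOn_Ioi_zero_of_norm_le {F G₀ G₁ : ℝ → ℝ} (hF : ContinuousOn F (Ioi 0))
    (hG₀ : IntegrableOn G₀ (Ioc 0 1)) (hG₁ : IntegrableOn G₁ (Ioi 1))
    (h₀ : ∀ x ∈ Ioc (0 : ℝ) 1, ‖F x‖ ≤ G₀ x) (h₁ : ∀ x ∈ Ioi (1 : ℝ), ‖F x‖ ≤ G₁ x) :
    IntegrableOn F (Ioi 0) := by
  rw [← Ioc_union_Ioi_eq_Ioi zero_le_one]
  refine IntegrableOn.union ?_ ?_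
  · exact hG₀.mono' ((hF.mono Ioc_subset_Ioi_self).aestronglyMeasurable measurableSet_Ioc)
      ((ae_restrict_iff' measurableSet_Ioc).2 (ae_of_all _ h₀))
  · exact hG₁.mono' ((hF.mono (Ioi_subset_Ioi zero_le_one)).aestronglyMeasurable
      measurableSet_Ioi) ((ae_restrict_iff' measurableSet_Ioi).2 (ae_of_all _ h₁))

theorem integrableOn_one_sub_exp_neg_mul_mul_rpow {a t : ℝ} (ha₀ : 0 < a) (ha₁ : a < 1)
    (ht : 0 ≤ t) : IntegrableOn (fun v => (1 - exp (-(t * v))) * v ^ (-a - 1)) (Ioi 0) := by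
  refine integrableOn_Ioi_zero_of_norm_le (G₀ := fun v => t * v ^ (-a))
    (G₁ := fun v => v ^ (-a - 1)) ?_
    ((intervalIntegral.intervalIntegrable_rpow' (by linarith)).1.const_mul t)
    (integrableOn_Ioi_rpow_of_lt (by linarith) one_pos) ?_ ?_
  · exact ContinuousOn.mul (by fun_prop) (continuousOn_id.rpow_const fun v hv => Or.inl hv.ne')
  · intro v ⟨hv, _⟩
    rw [norm_of_nonneg (mul_nonneg (one_sub_exp_neg_nonneg (by positivity)) (by positivity))]
    calc (1 - exp (-(t * v))) * v ^ (-a - 1) ≤ t * v * v ^ (-a - 1) := by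
          gcongr; exact one_sub_exp_neg_le_self _
      _ = t * v ^ (-a) := by rw [mul_assoc, ← rpow_one_add' hv.le (by linarith)]; ring_nf
  · intro v hv
    have hv : 0 < v := one_pos.trans hv
    rw [norm_of_nonneg (mul_nonneg (one_sub_exp_neg_nonneg (by positivity)) (by positivity))]
    exact mul_le_of_le_one_left (by positivity) (one_sub_exp_neg_le_one _)

theorem tendsto_one_sub_exp_neg_mul_mul_rpow_nhdsGT_zero {a t : ℝ} (ha : a < 1) (ht : 0 ≤ t) :
    Tendsto (fun v => (1 - exp (-(t * v))) * v ^ (-a)) (𝓝[>] 0) (𝓝 0) := by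
  have hbound : Tendsto (fun v : ℝ => t * v ^ (1 - a)) (𝓝[>] 0) (𝓝 0) := by
    simpa [zero_rpow (by linarith : 1 - a ≠ 0)] using
      ((continuousAt_rpow_const 0 (1 - a) (Or.inr (by linarith))).tendsto.mono_left
        nhdsWithin_le_nhds).const_mul t
  refine squeeze_zero' ?_ ?_ hbound
  all_goals filter_upwards [self_mem_nhdsWithin] with v (hv : 0 < v)
  · exact mul_nonneg (one_sub_exp_neg_nonneg (by positivity)) (rpow_nonneg hv.le _)
  · calc (1 - exp (-(t * v))) * v ^ (-a) ≤ t * v * v ^ (-a) := by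
          gcongr; exact one_sub_exp_neg_le_self _
      _ = t * v ^ (1 - a) := by rw [sub_eq_neg_add, rpow_add hv, rpow_one]; ring

theorem integral_one_sub_exp_neg_mul_mul_rpow {a t : ℝ} (ha₀ : 0 < a) (ha₁ : a < 1)
    (ht : 0 < t) :
    ∫ v in Ioi 0, (1 - exp (-(t * v))) * v ^ (-a - 1) = t ^ a * Gamma (1 - a) / a := by
  set u : ℝ → ℝ := fun v => 1 - exp (-(t * v))
  set w : ℝ → ℝ := fun v => -a⁻¹ * v ^ (-a)
  have hu : ∀ v ∈ Ioi (0 : ℝ), HasDerivAt u (exp (-(t * v)) * t) v := fun v _ => by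
    simpa using (((hasDerivAt_id v).const_mul t).neg.exp).const_sub 1
  have hw : ∀ v ∈ Ioi (0 : ℝ), HasDerivAt w (v ^ (-a - 1)) v := fun v hv =>
    ((hasDerivAt_rpow_const (p := -a) (Or.inl (ne_of_gt hv))).const_mul (-a⁻¹)).congr_deriv
      (by field_simp)
  have h_zero : Tendsto (u * w) (𝓝[>] 0) (𝓝 0) := by
    have := (tendsto_one_sub_exp_neg_mul_mul_rpow_nhdsGT_zero ha₁ ht.le).const_mul (-a⁻¹)
    rw [mul_zero] at this
    exact this.congr fun v => by simp only [u, w, Pi.mul_apply]; ring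
  have h_infty : Tendsto (u * w) atTop (𝓝 0) := by
    have hu_lim : Tendsto u atTop (𝓝 1) := by
      simpa using tendsto_const_nhds.sub
        (tendsto_exp_neg_atTop_nhds_zero.comp (tendsto_id.const_mul_atTop ht))
    have := hu_lim.mul ((tendsto_rpow_neg_atTop ha₀).const_mul (-a⁻¹))
    rwa [mul_zero, mul_zero] at this
  have hgamma : ∫ v in Ioi (0 : ℝ), v ^ (-a) * exp (-t * v ^ (1 : ℝ))
      = t ^ (a - 1) * Gamma (1 - a) := by
    rw [integral_rpow_mul_exp_neg_mul_rpow one_pos (by linarith) ht]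
    ring_nf
  have hint : IntegrableOn (fun v => exp (-(t * v)) * t * w v) (Ioi 0) := by
    refine IntegrableOn.congr_fun ((integrableOn_rpow_mul_exp_neg_mul_rpow (s := -a)
      (by linarith) one_pos ht).const_mul (-a⁻¹ * t)) (fun v _ => ?_) measurableSet_Ioi
    simp only [w, rpow_one]; ring_nf
  rw [integral_Ioi_mul_deriv_eq_deriv_mul hu hw
    (integrableOn_one_sub_exp_neg_mul_mul_rpow ha₀ ha₁ ht.le) hint h_zero h_infty]
  have hval : ∫ v in Ioi 0, exp (-(t * v)) * t * w v
      = -a⁻¹ * t * (t ^ (a - 1) * Gamma (1 - a)) := by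
    rw [← hgamma, ← integral_const_mul]
    refine setIntegral_congr_fun measurableSet_Ioi fun v _ => ?_
    simp only [w, rpow_one]; ring_nf
  rw [hval, rpow_sub_one ht.ne']
  field_simp
  ring

theorem integral_one_sub_exp_neg_mul_rpow_neg_mul_id {p t : ℝ} (hp : 2 < p) (ht : 0 < t) :
    ∫ r in Ioi 0, (1 - exp (-(t * r ^ (-p)))) * r = t ^ (2 / p) * Gamma (1 - 2 / p) / 2 := by
  have hp₀ : 0 < p := by linarith
  have key := integral_comp_rpow_Ioi
    (fun u => p⁻¹ * ((1 - exp (-(t * u))) * u ^ (-(2 / p) - 1))) (p := -p) (by linarith)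
  rw [integral_const_mul, integral_one_sub_exp_neg_mul_mul_rpow (div_pos two_pos hp₀)
    ((div_lt_one hp₀).2 hp) ht] at key
  calc ∫ r in Ioi 0, (1 - exp (-(t * r ^ (-p)))) * r
      = ∫ r in Ioi 0, (|-p| * r ^ (-p - 1)) •
          (p⁻¹ * ((1 - exp (-(t * r ^ (-p)))) * (r ^ (-p)) ^ (-(2 / p) - 1))) := by
        refine setIntegral_congr_fun measurableSet_Ioi fun r (hr : 0 < r) => ?_
        have hpow : r ^ (-p - 1) * (r ^ (-p)) ^ (-(2 / p) - 1) = r := by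
          rw [← rpow_mul hr.le, ← rpow_add hr]
          convert rpow_one r using 2
          field_simp
          ring
        rw [abs_neg, abs_of_pos hp₀, smul_eq_mul, mul_mul_mul_comm, mul_inv_cancel₀ hp₀.ne',
          one_mul, mul_left_comm, hpow]
    _ = t ^ (2 / p) * Gamma (1 - 2 / p) / 2 := by
        rw [key]
        field_simp

theorem setIntegral_exp_neg_lt_of_mul_rpow_lt {f : ℝ → ℝ} {a b : ℝ} (ha : 0 < a) (hb : 0 < b)
    (hf : MonotoneOn f (Ioi 0)) (hlt : ∀ s ∈ Ioi (0 : ℝ), b * s ^ a < f s) :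
    ∫ s in Ioi 0, exp (-f s) < b ^ (-1 / a) * Gamma (1 / a + 1) := by
  have hG : IntegrableOn (fun s => exp (-b * s ^ a)) (Ioi 0) := by
    simpa using integrableOn_rpow_mul_exp_neg_mul_rpow (s := 0) neg_one_lt_zero ha hb
  have hF : IntegrableOn (fun s => exp (-f s)) (Ioi 0) := by
    refine hG.mono' ?_ ((ae_restrict_iff' measurableSet_Ioi).2 (ae_of_all _ fun s hs => ?_))
    · exact (aemeasurable_restrict_of_antitoneOn measurableSet_Ioi
        fun x hx y hy hxy => exp_le_exp.2 (neg_le_neg (hf hx hy hxy))).aestronglyMeasurable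
    · rw [norm_of_nonneg (exp_pos _).le, neg_mul]
      exact exp_le_exp.2 (neg_le_neg (hlt s hs).le)
  rw [← integral_exp_neg_mul_rpow ha hb]
  refine setIntegral_lt_setIntegral_of_forall_lt measurableSet_Ioi (by simp) hF hG
    fun s hs => exp_lt_exp.2 ?_
  rw [neg_mul]
  exact neg_lt_neg (hlt s hs)

/-- The paper's `Z(s)` for the path loss `g(r) = A r^{-γ-2} + B r^{-γ}`; the theorem has `A = γ²`
and `B = 4 W_e / c²`, and `B = 0` is the narrowband case. -/
noncomputable def pathLossZ (γ A B s : ℝ) : ℝ :=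
  ∫ r in Ioi 0, (1 - exp (-(s * (A * r ^ (-γ - 2) + B * r ^ (-γ))))) * r

section pathLossZ

variable {γ A B s : ℝ}

theorem integrableOn_pathLossZ_integrand (hγ : 2 < γ) (hA : 0 ≤ A) (hB : 0 ≤ B) (hs : 0 ≤ s) :
    IntegrableOn (fun r => (1 - exp (-(s * (A * r ^ (-γ - 2) + B * r ^ (-γ))))) * r) (Ioi 0) := by
  have harg : ∀ r : ℝ, 0 < r → 0 ≤ s * (A * r ^ (-γ - 2) + B * r ^ (-γ)) := fun r hr => by
    positivity
  refine integrableOn_Ioi_zero_of_norm_le (G₀ := fun _ => 1)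
    (G₁ := fun r => s * (A + B) * r ^ (1 - γ)) ?_ (integrableOn_const (by simp))
    ((integrableOn_Ioi_rpow_of_lt (by linarith) one_pos).const_mul _) ?_ ?_
  · refine ContinuousOn.mul ?_ continuousOn_id
    have hcont : ∀ q : ℝ, ContinuousOn (fun r : ℝ => r ^ q) (Ioi 0) := fun q =>
      continuousOn_id.rpow_const fun r hr => Or.inl (ne_of_gt hr)
    exact continuousOn_const.sub (((((hcont _).const_mul A).add ((hcont _).const_mul B)).const_mul
      s).neg.rexp)
  · intro r ⟨hr, hr1⟩
    rw [norm_of_nonneg (mul_nonneg (one_sub_exp_neg_nonneg (harg r hr)) hr.le)]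
    exact mul_le_one₀ (one_sub_exp_neg_le_one _) hr.le hr1
  · intro r (hr1 : 1 < r)
    have hr : 0 < r := one_pos.trans hr1
    rw [norm_of_nonneg (mul_nonneg (one_sub_exp_neg_nonneg (harg r hr)) hr.le)]
    have hdecay : r ^ (-γ - 2) ≤ r ^ (-γ) := rpow_le_rpow_of_exponent_le hr1.le (by linarith)
    calc (1 - exp (-(s * (A * r ^ (-γ - 2) + B * r ^ (-γ))))) * r
        ≤ s * (A * r ^ (-γ) + B * r ^ (-γ)) * r := by
          gcongr
          exact (one_sub_exp_neg_le_self _).trans (by gcongr)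
      _ = s * (A + B) * r ^ (1 - γ) := by
          rw [sub_eq_neg_add, rpow_add hr, rpow_one]; ring

theorem monotoneOn_pathLossZ (hγ : 2 < γ) (hA : 0 ≤ A) (hB : 0 ≤ B) :
    MonotoneOn (pathLossZ γ A B) (Ici 0) := by
  intro s (hs : 0 ≤ s) s' (hs' : 0 ≤ s') hss'
  refine setIntegral_mono_on (integrableOn_pathLossZ_integrand hγ hA hB hs)
    (integrableOn_pathLossZ_integrand hγ hA hB hs') measurableSet_Ioi fun r (hr : 0 < r) => ?_
  gcongr

theorem pathLossZ_lt_of_lt (hγ : 2 < γ) (hA : 0 ≤ A) (hB : 0 ≤ B) (hs : 0 < s) {B' : ℝ}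
    (hBB' : B < B') : pathLossZ γ A B s < pathLossZ γ A B' s := by
  refine setIntegral_lt_setIntegral_of_forall_lt measurableSet_Ioi (by simp)
    (integrableOn_pathLossZ_integrand hγ hA hB hs.le)
    (integrableOn_pathLossZ_integrand hγ hA (hB.trans hBB'.le) hs.le) fun r (hr : 0 < r) => ?_
  gcongr

theorem pathLossZ_zero_right (hγ : 0 < γ) (hA : 0 < A) (hs : 0 < s) :
    pathLossZ γ A 0 s = (s * A) ^ (2 / (γ + 2)) * Gamma (γ / (γ + 2)) / 2 := by
  have h := integral_one_sub_exp_neg_mul_rpow_neg_mul_id (p := γ + 2) (by linarith)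
    (mul_pos hs hA)
  rw [show 1 - 2 / (γ + 2) = γ / (γ + 2) by field_simp; ring] at h
  rw [pathLossZ, ← h]
  refine setIntegral_congr_fun measurableSet_Ioi fun r _ => ?_
  rw [zero_mul, add_zero, neg_add', ← mul_assoc]

theorem lt_pathLossZ_of_pos (hγ : 2 < γ) (hA : 0 < A) (hB : 0 < B) (hs : 0 < s) :
    (s * A) ^ (2 / (γ + 2)) * Gamma (γ / (γ + 2)) / 2 < pathLossZ γ A B s := by
  rw [← pathLossZ_zero_right (by linarith) hA hs]
  exact pathLossZ_lt_of_lt hγ hA.le le_rfl hs hB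

end pathLossZ

/-- `CRB_LB < CRB_LB,N`: the narrowband closed form strictly upper-bounds `CRB_LB`
for every effective bandwidth `W_e > 0`. -/
theorem CRB_LB_lt_narrowband (γ We c lam ρ : ℝ)
    (hγ : 2 < γ) (hWe : 0 < We) (hc : 0 < c) (hlam : 0 < lam) (hρ : 0 < ρ)
    (g Z : ℝ → ℝ)
    (hg : ∀ r > 0, g r = r ^ (-γ - 2) * (γ ^ 2 + 4 * We * r ^ 2 / c ^ 2))
    (hZ : ∀ s > 0, Z s = ∫ r in Set.Ioi (0 : ℝ), (1 - Real.exp (-s * g r)) * r)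
    (CRB_LB CRB_LBN : ℝ)
    (hLB : CRB_LB = (4 / ρ) * ∫ s in Set.Ioi (0 : ℝ), Real.exp (-(2 * π * lam * Z s)))
    (hLBN : CRB_LBN = (4 / (ρ * γ ^ 2))
      * (π * lam * Real.Gamma (γ / (γ + 2))) ^ (-(γ / 2 + 1)) * Real.Gamma (2 + γ / 2)) :
    CRB_LB < CRB_LBN := by
  have hγ₀ : 0 < γ := by linarith
  have hB : 0 < 4 * We / c ^ 2 := by positivity
  set a := 2 / (γ + 2) with ha
  set L := π * lam * Gamma (γ / (γ + 2))
  have hL₀ : 0 < L := by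
    have := Gamma_pos_of_pos (div_pos hγ₀ (by linarith : 0 < γ + 2))
    positivity
  have hZ' : ∀ s > 0, Z s = pathLossZ γ (γ ^ 2) (4 * We / c ^ 2) s := fun s hs => by
    refine (hZ s hs).trans (setIntegral_congr_fun measurableSet_Ioi fun r (hr : 0 < r) => ?_)
    rw [hg r hr, show r ^ (-γ) = r ^ (-γ - 2) * r ^ 2 by
      rw [← rpow_natCast, ← rpow_add hr]; norm_num]
    ring_nf
  have hmono : MonotoneOn (fun s => 2 * π * lam * Z s) (Ioi 0) := fun s hs s' hs' hss' => by
    simp only [hZ' s hs, hZ' s' hs']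
    gcongr
    exact monotoneOn_pathLossZ hγ (sq_nonneg γ) hB.le hs.out.le hs'.out.le hss'
  have hlower : ∀ s ∈ Ioi (0 : ℝ), L * (γ ^ 2) ^ a * s ^ a < 2 * π * lam * Z s := fun s hs => by
    calc L * (γ ^ 2) ^ a * s ^ a = 2 * π * lam * ((s * γ ^ 2) ^ a * Gamma (γ / (γ + 2)) / 2) := by
          rw [mul_rpow hs.out.le (sq_nonneg γ)]; ring
      _ < 2 * π * lam * Z s := by
          rw [hZ' s hs]; gcongr; exact lt_pathLossZ_of_pos hγ (by positivity) hB hs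
  have hclosed : CRB_LBN = 4 / ρ * ((L * (γ ^ 2) ^ a) ^ (-1 / a) * Gamma (1 / a + 1)) := by
    rw [hLBN, mul_rpow hL₀.le (by positivity), ← rpow_mul (sq_nonneg γ),
      mul_div_cancel₀ _ (by positivity : a ≠ 0), show -1 / a = -(γ / 2 + 1) by rw [ha]; field_simp,
      show 1 / a + 1 = 2 + γ / 2 by rw [ha]; field_simp; ring, rpow_neg_one]
    field_simp
  rw [hLB, hclosed]
  exact mul_lt_mul_of_pos_left (setIntegral_exp_neg_lt_of_mul_rpow_lt (by positivity)
    (by positivity) hmono hlower) (by positivity)
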